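/- arXiv:2604.06136 — 3 statements merged into one kernel-verified Lean document; each statement's English description precedes it below -/
import Mathlib

section
/- Let m : ℝ → ℝ be an even, positive, continuous function that is non-increasing on [0,∞). If ∫₁^∞ (log⁻ m(t))/t² dt = ∞, then there exists a tame function m⁺ : ℝ → ℝ with m⁺(x) ≥ m(x) for all x ∈ ℝ and ∫₁^∞ (log⁻ m⁺(t))/t² dt = ∞. -/
open MeasureTheory Filter Topology

/-- `log⁻ t = max (−log t) 0`. -/
noncomputable def negLog (t : ℝ) : ℝ := max (-Real.log t) 0

/-- A function `m : ℝ → ℝ` is tame if it is even, positive, non-increasing on `[0, ∞)`,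
`C²`-smooth, satisfies `m(x) → 0`, `x·m'(x) → 0`, `x²·m''(x) → 0` as `|x| → ∞`,
is constant on `[−1, 1]` and constant on `{x : 2^k − 2^(k−3) ≤ |x| ≤ 2^k + 2^(k−2)}`
for every `k ≥ 3`. -/
def Tame (m : ℝ → ℝ) : Prop :=
  (∀ x, m (-x) = m x) ∧ (∀ x, 0 < m x) ∧ AntitoneOn m (Set.Ici 0) ∧
  ContDiff ℝ 2 m ∧
  Tendsto m (cocompact ℝ) (𝓝 0) ∧
  Tendsto (fun x => x * deriv m x) (cocompact ℝ) (𝓝 0) ∧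
  Tendsto (fun x => x ^ 2 * deriv (deriv m) x) (cocompact ℝ) (𝓝 0) ∧
  (∃ c : ℝ, ∀ x : ℝ, |x| ≤ 1 → m x = c) ∧
  (∀ k : ℕ, 3 ≤ k → ∃ c : ℝ, ∀ x : ℝ,
    (2 : ℝ) ^ k - 2 ^ (k - 3) ≤ |x| → |x| ≤ (2 : ℝ) ^ k + 2 ^ (k - 2) → m x = c)

/-!
Let `ψ` be a smooth even cutoff, non-increasing in `|y|`, equal to `1` on `[-10, 10]` and to `0`
outside `(-14, 14)`. For an antitone sequence `c_j → 0` put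
`m⁺(x) = ∑ⱼ (c_j - c_{j+1}) ψ(x / 2^j)`. On the shell `14·2^(n-1) < |x| < 20·2^n` all terms but
the `n`-th are locally constant, so there `m⁺ = c_{n+1} + (c_n - c_{n+1}) ψ(x / 2^n)`; this gives
smoothness and the plateaus, and since `y ψ'(y)` and `y² ψ''(y)` are bounded, the dilation
invariance of `x ∂ₓ` bounds `x m⁺'(x)` and `x² m⁺''(x)` by a constant times `c_n`.
Choosing `c_j = m(5(2^j - 1))` makes `m⁺` a majorant of `m` with `m⁺(t) ≤ m(t/8)` for `t ≥ 20`,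
and the substitution `t ↦ t/8` transfers the divergence of the logarithmic integral.
-/

open Set
open scoped ENNReal ContDiff

lemma HasCompactSupport.exists_abs_pow_mul_iterate_deriv_le {f : ℝ → ℝ}
    (hf : ContDiff ℝ ∞ f) (hsupp : HasCompactSupport f) (k i : ℕ) :
    ∃ B, ∀ y, |y ^ k * deriv^[i] f y| ≤ B := by
  have hsupp_i : HasCompactSupport (deriv^[i] f) := by
    induction i with
    | zero => exact hsupp
    | succ i ih => rw [Function.iterate_succ_apply']; exact ih.deriv
  exact ((continuous_pow k).mul (hf.iterate_deriv i).continuous)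
    |>.bounded_above_of_compact_support (hsupp_i.mul_left (f := fun y => y ^ k))

lemma deriv_const_mul_comp_div (f : ℝ → ℝ) (b s : ℝ) :
    deriv (fun y => b * f (y / s)) = fun y => b / s * deriv f (y / s) := by
  ext y
  have h := deriv_comp_mul_left (f := f) (x := y) s⁻¹
  simp only [smul_eq_mul, ← div_eq_inv_mul] at h
  rw [deriv_const_mul_field']
  simp only [h]
  ring

section Telescoping

variable {c : ℕ → ℝ} (hc : Antitone c) (hc0 : Tendsto c atTop (𝓝 0))
include hc hc0

lemma hasSum_sub_succ (n : ℕ) : HasSum (fun j => c (j + n) - c (j + n + 1)) (c n) := by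
  rw [hasSum_iff_tendsto_nat_of_nonneg fun j => sub_nonneg.2 (hc (Nat.le_succ _))]
  have hsum (N : ℕ) : ∑ j ∈ Finset.range N, (c (j + n) - c (j + n + 1)) = c n - c (N + n) := by
    simpa [Nat.add_right_comm] using Finset.sum_range_sub' (fun j => c (j + n)) N
  simp_rw [hsum]
  simpa using tendsto_const_nhds.sub (hc0.comp (tendsto_add_atTop_nat n))

variable {w : ℕ → ℝ} (hw0 : ∀ j, 0 ≤ w j) (hw1 : ∀ j, w j ≤ 1)
include hw0 hw1

lemma summable_sub_succ_mul : Summable fun j => (c j - c (j + 1)) * w j :=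
  (hasSum_sub_succ hc hc0 0).summable.of_nonneg_of_le
    (fun j => mul_nonneg (sub_nonneg.2 (hc (Nat.le_succ j))) (hw0 j))
    (fun j => mul_le_of_le_one_right (sub_nonneg.2 (hc (Nat.le_succ j))) (hw1 j))

lemma tsum_sub_succ_mul_le {n : ℕ} (hwn : ∀ j < n, w j = 0) :
    ∑' j, (c j - c (j + 1)) * w j ≤ c n := by
  have hs := summable_sub_succ_mul hc hc0 hw0 hw1
  rw [← hs.sum_add_tsum_nat_add n,
    Finset.sum_eq_zero fun j hj => by rw [hwn j (Finset.mem_range.1 hj), mul_zero], zero_add,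
    ← (hasSum_sub_succ hc hc0 n).tsum_eq]
  exact ((summable_nat_add_iff n).2 hs).tsum_le_tsum
    (fun j => mul_le_of_le_one_right (sub_nonneg.2 (hc (Nat.le_succ _))) (hw1 _))
    (hasSum_sub_succ hc hc0 n).summable

lemma tsum_sub_succ_mul_eq_sum_add {n : ℕ} (hwn : ∀ j, n ≤ j → w j = 1) :
    ∑' j, (c j - c (j + 1)) * w j = ∑ j ∈ Finset.range n, (c j - c (j + 1)) * w j + c n := by
  rw [← (summable_sub_succ_mul hc hc0 hw0 hw1).sum_add_tsum_nat_add n,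
    ← (hasSum_sub_succ hc hc0 n).tsum_eq]
  simp only [hwn _ (Nat.le_add_left n _), mul_one]

lemma le_tsum_sub_succ_mul {n : ℕ} (hwn : ∀ j, n ≤ j → w j = 1) :
    c n ≤ ∑' j, (c j - c (j + 1)) * w j := by
  rw [tsum_sub_succ_mul_eq_sum_add hc hc0 hw0 hw1 hwn]
  exact le_add_of_nonneg_left <| Finset.sum_nonneg fun j _ =>
    mul_nonneg (sub_nonneg.2 (hc (Nat.le_succ j))) (hw0 j)

lemma tsum_sub_succ_mul_eq {n : ℕ} (hw_lt : ∀ j < n, w j = 0) (hw_gt : ∀ j, n < j → w j = 1) :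
    ∑' j, (c j - c (j + 1)) * w j = c (n + 1) + (c n - c (n + 1)) * w n := by
  rw [tsum_sub_succ_mul_eq_sum_add hc hc0 hw0 hw1 hw_gt, Finset.sum_range_succ,
    Finset.sum_eq_zero fun j hj => by rw [hw_lt j (Finset.mem_range.1 hj), mul_zero]]
  ring

end Telescoping

lemma exists_abs_lt_mul_two_pow {a : ℝ} (ha : 0 < a) (x : ℝ) :
    ∃ n : ℕ, |x| < a * 2 ^ n ∧ ∀ j < n, a * 2 ^ j ≤ |x| := by
  classical
  have hex : ∃ n : ℕ, |x| < a * 2 ^ n := by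
    obtain ⟨n, hn⟩ := pow_unbounded_of_one_lt (|x| / a) one_lt_two
    exact ⟨n, by rwa [div_lt_iff₀ ha, mul_comm] at hn⟩
  exact ⟨Nat.find hex, Nat.find_spec hex, fun j hj => not_lt.1 (Nat.find_min hex hj)⟩

lemma tendsto_cocompact_of_abs_le {f : ℝ → ℝ} {u R : ℕ → ℝ} (hu : Tendsto u atTop (𝓝 0))
    (hf : ∀ N x, R N ≤ |x| → |f x| ≤ u N) : Tendsto f (cocompact ℝ) (𝓝 0) := by
  rw [Metric.tendsto_nhds]
  intro ε hε
  obtain ⟨N, hN⟩ := (hu.eventually (gt_mem_nhds hε)).exists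
  filter_upwards [tendsto_norm_cocompact_atTop.eventually_ge_atTop (R N)] with x hx
  rw [Real.dist_eq, sub_zero]
  exact (hf N x hx).trans_lt hN

lemma negLog_nonneg (t : ℝ) : 0 ≤ negLog t := le_max_right _ _

lemma negLog_le_negLog {a b : ℝ} (ha : 0 < a) (hab : a ≤ b) : negLog b ≤ negLog a :=
  max_le_max (neg_le_neg (Real.log_le_log ha hab)) le_rfl

lemma setLIntegral_Ici_comp_mul_left (f : ℝ → ℝ≥0∞) {a : ℝ} (ha : 0 < a) (b : ℝ) :
    ∫⁻ x in Ici b, f (a * x) = ENNReal.ofReal a⁻¹ * ∫⁻ y in Ici (a * b), f y := by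
  have hind :
      (fun x => (Ici (a * b)).indicator f (a * x)) = (Ici b).indicator (f <| a * ·) := by
    ext x
    simp only [indicator, mem_Ici, mul_le_mul_iff_right₀ ha]
  rw [← lintegral_indicator measurableSet_Ici, ← lintegral_indicator measurableSet_Ici, ← hind]
  calc ∫⁻ x, (Ici (a * b)).indicator f (a * x)
      = ∫⁻ y, (Ici (a * b)).indicator f y ∂(Measure.map (a * ·) volume) :=
        (lintegral_map_equiv _ (MeasurableEquiv.mulLeft₀ a ha.ne')).symm
    _ = _ := by
        rw [Real.map_volume_mul_left ha.ne', lintegral_smul_measure, abs_of_pos (inv_pos.2 ha),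
          smul_eq_mul]

section LogIntegral

variable {m : ℝ → ℝ} (h_pos : ∀ x, 0 < m x) (h_mono : AntitoneOn m (Ici 0))
  (h_int : ∫⁻ t in Ici (1 : ℝ), ENNReal.ofReal (negLog (m t) / t ^ 2) = ⊤)
include h_pos h_mono h_int

lemma tendsto_atTop_zero_of_lintegral_negLog_eq_top : Tendsto m atTop (𝓝 0) := by
  rw [Metric.tendsto_atTop]
  intro ε hε
  obtain ⟨T, hT0, hT⟩ : ∃ T, 0 ≤ T ∧ m T < ε := by
    by_contra! h
    have hint : IntegrableOn (fun t : ℝ => negLog ε * t ^ (-2 : ℝ)) (Ici 1) := by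
      rw [integrableOn_Ici_iff_integrableOn_Ioi]
      exact (integrableOn_Ioi_rpow_of_lt (by norm_num) one_pos).const_mul _
    refine hint.lintegral_lt_top.ne (top_le_iff.1 (h_int ▸ setLIntegral_mono' measurableSet_Ici
      fun t ht => ENNReal.ofReal_le_ofReal ?_))
    have ht : (0 : ℝ) < t := zero_lt_one.trans_le ht
    rw [Real.rpow_neg_ofNat, zpow_neg, zpow_ofNat, ← div_eq_mul_inv]
    exact div_le_div_of_nonneg_right (negLog_le_negLog hε (h t ht.le)) (by positivity)
  refine ⟨T, fun t ht => ?_⟩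
  rw [Real.dist_eq, sub_zero, abs_of_pos (h_pos t)]
  exact (h_mono hT0 (hT0.trans ht) ht).trans_lt hT

lemma lintegral_Ici_negLog_eq_top (b : ℝ) :
    ∫⁻ t in Ici b, ENNReal.ofReal (negLog (m t) / t ^ 2) = ⊤ := by
  have hfin : ∫⁻ t in Ico 1 b, ENNReal.ofReal (negLog (m t) / t ^ 2) ≠ ⊤ := by
    refine (setLIntegral_lt_top_of_le_nnreal (by simp)
      ⟨(negLog (m b)).toNNReal, fun t ht => ENNReal.ofReal_le_ofReal ?_⟩).ne
    calc negLog (m t) / t ^ 2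
        ≤ negLog (m t) := div_le_self (negLog_nonneg _) (one_le_pow₀ ht.1)
      _ ≤ negLog (m b) := negLog_le_negLog (h_pos b)
        (h_mono (zero_le_one.trans ht.1) (by rw [mem_Ici]; linarith [ht.1, ht.2]) ht.2.le)
  have hsplit : ⊤ ≤ (∫⁻ t in Ico 1 b, ENNReal.ofReal (negLog (m t) / t ^ 2)) +
      ∫⁻ t in Ici b, ENNReal.ofReal (negLog (m t) / t ^ 2) :=
    h_int ▸ (lintegral_mono_set fun t ht => (lt_or_ge t b).imp (fun h => ⟨ht, h⟩) id).trans
      (lintegral_union_le _ _ _)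
  rw [top_le_iff, ENNReal.add_eq_top] at hsplit
  exact hsplit.resolve_left hfin

lemma lintegral_negLog_eq_top_of_le_comp_div {g : ℝ → ℝ} (hg_pos : ∀ x, 0 < g x) {K T : ℝ}
    (hK : 0 < K) (hT : 1 ≤ T) (hgm : ∀ t, T ≤ t → g t ≤ m (t / K)) :
    ∫⁻ t in Ici 1, ENNReal.ofReal (negLog (g t) / t ^ 2) = ⊤ := by
  have hscaled : ∫⁻ t in Ici T, ENNReal.ofReal (negLog (m (K⁻¹ * t)) / (K⁻¹ * t) ^ 2) = ⊤ := by
    rw [setLIntegral_Ici_comp_mul_left (fun s => ENNReal.ofReal (negLog (m s) / s ^ 2))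
      (inv_pos.2 hK), lintegral_Ici_negLog_eq_top h_pos h_mono h_int,
      ENNReal.mul_top (by simpa using hK)]
  have hK2 : ENNReal.ofReal (K⁻¹ ^ 2) ≠ 0 := by simpa using hK.ne'
  refine eq_top_iff.2 ?_
  calc ⊤ = ENNReal.ofReal (K⁻¹ ^ 2) *
        ∫⁻ t in Ici T, ENNReal.ofReal (negLog (m (K⁻¹ * t)) / (K⁻¹ * t) ^ 2) := by
        rw [hscaled, ENNReal.mul_top hK2]
    _ = ∫⁻ t in Ici T,
        ENNReal.ofReal (K⁻¹ ^ 2) * ENNReal.ofReal (negLog (m (K⁻¹ * t)) / (K⁻¹ * t) ^ 2) :=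
      (lintegral_const_mul' _ _ ENNReal.ofReal_ne_top).symm
    _ ≤ ∫⁻ t in Ici T, ENNReal.ofReal (negLog (g t) / t ^ 2) := by
      refine setLIntegral_mono' measurableSet_Ici fun t ht => ?_
      have ht0 : 0 < t := zero_lt_one.trans_le (hT.trans ht)
      rw [← ENNReal.ofReal_mul (by positivity), inv_mul_eq_div,
        show K⁻¹ ^ 2 * (negLog (m (t / K)) / (t / K) ^ 2) = negLog (m (t / K)) / t ^ 2 by
          field_simp]
      exact ENNReal.ofReal_le_ofReal <| div_le_div_of_nonneg_right
        (negLog_le_negLog (hg_pos t) (hgm t ht)) (sq_nonneg t)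
    _ ≤ ∫⁻ t in Ici 1, ENNReal.ofReal (negLog (g t) / t ^ 2) :=
      lintegral_mono_set (Ici_subset_Ici.2 hT)

end LogIntegral

namespace TameMajorant

-- Working with `y ^ 2` rather than `|y|` keeps `bump` smooth at `0`; the affine map sends
-- `y ^ 2 ∈ [100, 196]` onto the transition interval `[0, 1]`.
noncomputable def bump (y : ℝ) : ℝ := 1 - Real.smoothTransition ((y ^ 2 - 100) / 96)

lemma bump_nonneg (y : ℝ) : 0 ≤ bump y :=
  sub_nonneg.2 (Real.smoothTransition.le_one _)

lemma bump_le_one (y : ℝ) : bump y ≤ 1 :=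
  sub_le_self _ (Real.smoothTransition.nonneg _)

lemma bump_eq_one {y : ℝ} (hy : |y| ≤ 10) : bump y = 1 := by
  have : y ^ 2 ≤ 10 ^ 2 := sq_le_sq' (abs_le.1 hy).1 (abs_le.1 hy).2
  rw [bump, Real.smoothTransition.zero_of_nonpos (by linarith), sub_zero]

lemma bump_eq_zero {y : ℝ} (hy : 14 ≤ |y|) : bump y = 0 := by
  have : 14 ^ 2 ≤ y ^ 2 := by simpa using sq_le_sq' (by linarith) hy
  rw [bump, Real.smoothTransition.one_of_one_le (by rw [le_div_iff₀ (by norm_num)]; linarith),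
    sub_self]

lemma bump_neg (y : ℝ) : bump (-y) = bump y := by simp [bump]

lemma antitoneOn_bump : AntitoneOn bump (Ici 0) := fun _ ha _ _ hab =>
  sub_le_sub_left (Real.smoothTransition.monotone (by gcongr)) 1

lemma contDiff_bump : ContDiff ℝ ∞ bump :=
  contDiff_const.sub <| Real.smoothTransition.contDiff.comp <|
    ((contDiff_id.pow 2).sub contDiff_const).div_const _

lemma hasCompactSupport_bump : HasCompactSupport bump := by
  refine HasCompactSupport.intro (isCompact_Icc (a := -14) (b := 14))
    fun y hy => bump_eq_zero ?_
  rw [mem_Icc, not_and_or, not_le, not_le] at hy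
  rcases hy with hy | hy <;> [rw [abs_of_neg (by linarith)]; rw [abs_of_pos (by linarith)]] <;>
    linarith

lemma exists_shell (x : ℝ) : ∃ n : ℕ, (∀ j < n, 14 * 2 ^ j < |x|) ∧ |x| < 20 * 2 ^ n := by
  obtain ⟨n, hn, hj⟩ := exists_abs_lt_mul_two_pow (by norm_num : (0 : ℝ) < 20) x
  refine ⟨n, fun j hj' => lt_of_lt_of_le ?_ (hj j hj'), hn⟩
  gcongr
  norm_num

lemma exists_shell_of_le {N : ℕ} {x : ℝ} (hx : 20 * 2 ^ N ≤ |x|) :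
    ∃ n, N ≤ n ∧ (∀ j < n, 14 * 2 ^ j < |x|) ∧ |x| < 20 * 2 ^ n := by
  obtain ⟨n, h0, h1⟩ := exists_shell x
  have hNn : (2 : ℝ) ^ N < 2 ^ n := by linarith
  exact ⟨n, ((pow_lt_pow_iff_right₀ one_lt_two).1 hNn).le, h0, h1⟩

noncomputable def majorant (c : ℕ → ℝ) (x : ℝ) : ℝ :=
  ∑' j, (c j - c (j + 1)) * bump (x / 2 ^ j)

lemma bump_div_two_pow_eq_one {x : ℝ} {j : ℕ} (h : |x| ≤ 10 * 2 ^ j) : bump (x / 2 ^ j) = 1 :=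
  bump_eq_one <| by
    rwa [abs_div, abs_of_pos (by positivity : (0 : ℝ) < 2 ^ j), div_le_iff₀ (by positivity)]

lemma bump_div_two_pow_eq_zero {x : ℝ} {j : ℕ} (h : 14 * 2 ^ j ≤ |x|) : bump (x / 2 ^ j) = 0 :=
  bump_eq_zero <| by
    rwa [abs_div, abs_of_pos (by positivity : (0 : ℝ) < 2 ^ j), le_div_iff₀ (by positivity)]

lemma majorant_nonneg {c : ℕ → ℝ} (hc : Antitone c) (x : ℝ) : 0 ≤ majorant c x :=
  tsum_nonneg fun j => mul_nonneg (sub_nonneg.2 (hc j.le_succ)) (bump_nonneg _)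

section Majorant

variable {c : ℕ → ℝ} (hc : Antitone c) (hc0 : Tendsto c atTop (𝓝 0))
include hc hc0

lemma majorant_le {x : ℝ} {n : ℕ} (h : ∀ j < n, 14 * 2 ^ j ≤ |x|) : majorant c x ≤ c n :=
  tsum_sub_succ_mul_le hc hc0 (fun _ => bump_nonneg _) (fun _ => bump_le_one _)
    fun j hj => bump_div_two_pow_eq_zero (h j hj)

lemma le_majorant {x : ℝ} {n : ℕ} (h : |x| ≤ 10 * 2 ^ n) : c n ≤ majorant c x :=
  le_tsum_sub_succ_mul hc hc0 (fun _ => bump_nonneg _) (fun _ => bump_le_one _)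
    fun j hj => bump_div_two_pow_eq_one <| h.trans <| by gcongr; norm_num

lemma majorant_eq_of_le_of_le {x : ℝ} {n : ℕ} (h0 : ∀ j < n, 14 * 2 ^ j ≤ |x|)
    (h1 : |x| ≤ 10 * 2 ^ n) : majorant c x = c n :=
  (majorant_le hc hc0 h0).antisymm (le_majorant hc hc0 h1)

lemma majorant_eq_add {x : ℝ} {n : ℕ} (h0 : ∀ j < n, 14 * 2 ^ j ≤ |x|)
    (h1 : |x| ≤ 20 * 2 ^ n) :
    majorant c x = c (n + 1) + (c n - c (n + 1)) * bump (x / 2 ^ n) :=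
  tsum_sub_succ_mul_eq hc hc0 (fun _ => bump_nonneg _) (fun _ => bump_le_one _)
    (fun j hj => bump_div_two_pow_eq_zero (h0 j hj))
    fun j hj => bump_div_two_pow_eq_one <| h1.trans <| by
      rw [show (20 : ℝ) * 2 ^ n = 10 * 2 ^ (n + 1) by ring]; gcongr; norm_num; exact hj

lemma majorant_eventuallyEq {x : ℝ} {n : ℕ} (h0 : ∀ j < n, 14 * 2 ^ j < |x|)
    (h1 : |x| < 20 * 2 ^ n) :
    majorant c =ᶠ[𝓝 x] fun y => c (n + 1) + (c n - c (n + 1)) * bump (y / 2 ^ n) := by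
  have hlt : ∀ᶠ y in 𝓝 x, ∀ j ∈ Iio n, 14 * 2 ^ j < |y| :=
    (eventually_all_finite (finite_Iio n)).2 fun j hj =>
      (continuous_abs.tendsto x).eventually (lt_mem_nhds (h0 j hj))
  filter_upwards [hlt, (continuous_abs.tendsto x).eventually (gt_mem_nhds h1)] with y hy0 hy1
  exact majorant_eq_add hc hc0 (fun j hj => (hy0 j hj).le) hy1.le

lemma deriv_majorant {x : ℝ} {n : ℕ} (h0 : ∀ j < n, 14 * 2 ^ j < |x|)
    (h1 : |x| < 20 * 2 ^ n) :
    deriv (majorant c) x = (c n - c (n + 1)) / 2 ^ n * deriv bump (x / 2 ^ n) := by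
  rw [(majorant_eventuallyEq hc hc0 h0 h1).deriv_eq, deriv_const_add', deriv_const_mul_comp_div]

lemma deriv_deriv_majorant {x : ℝ} {n : ℕ} (h0 : ∀ j < n, 14 * 2 ^ j < |x|)
    (h1 : |x| < 20 * 2 ^ n) :
    deriv (deriv (majorant c)) x =
      (c n - c (n + 1)) / 2 ^ n / 2 ^ n * deriv (deriv bump) (x / 2 ^ n) := by
  rw [(majorant_eventuallyEq hc hc0 h0 h1).deriv.deriv_eq, deriv_const_add',
    deriv_const_mul_comp_div, deriv_const_mul_comp_div]

lemma contDiff_majorant : ContDiff ℝ 2 (majorant c) := by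
  refine contDiff_iff_contDiffAt.2 fun x => ?_
  obtain ⟨n, h0, h1⟩ := exists_shell x
  have hloc : ContDiff ℝ 2 fun y => c (n + 1) + (c n - c (n + 1)) * bump (y / 2 ^ n) :=
    contDiff_const.add <| contDiff_const.mul <| (contDiff_bump.of_le (by norm_cast)).comp <|
      contDiff_id.div_const _
  exact hloc.contDiffAt.congr_of_eventuallyEq (majorant_eventuallyEq hc hc0 h0 h1)

lemma antitoneOn_majorant : AntitoneOn (majorant c) (Ici 0) := fun a ha b hb hab => by
  have hs (x : ℝ) := summable_sub_succ_mul hc hc0 (fun j => bump_nonneg (x / 2 ^ j))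
    fun j => bump_le_one (x / 2 ^ j)
  refine (hs b).tsum_le_tsum (fun j => mul_le_mul_of_nonneg_left ?_ (sub_nonneg.2 (hc j.le_succ)))
    (hs a)
  have hj : (0 : ℝ) < 2 ^ j := by positivity
  exact antitoneOn_bump (div_nonneg ha hj.le) (div_nonneg hb hj.le) (by gcongr)

lemma sub_succ_le_of_le {N n : ℕ} (h : N ≤ n) : c n - c (n + 1) ≤ c N := by
  linarith [hc h, hc.le_of_tendsto hc0 (n + 1)]

lemma abs_majorant_le {N : ℕ} {x : ℝ} (hx : 20 * 2 ^ N ≤ |x|) : |majorant c x| ≤ c N := by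
  rw [abs_of_nonneg (majorant_nonneg hc x)]
  refine majorant_le hc hc0 fun j hj => le_trans ?_ hx
  have : (2 : ℝ) ^ j ≤ 2 ^ N := pow_le_pow_right₀ one_le_two hj.le
  linarith [pow_pos (two_pos : (0 : ℝ) < 2) j]

lemma abs_mul_deriv_majorant_le {B : ℝ} (hB : ∀ y, |y * deriv bump y| ≤ B) {N : ℕ} {x : ℝ}
    (hx : 20 * 2 ^ N ≤ |x|) : |x * deriv (majorant c) x| ≤ c N * B := by
  obtain ⟨n, hNn, h0, h1⟩ := exists_shell_of_le hx
  rw [deriv_majorant hc hc0 h0 h1,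
    show x * ((c n - c (n + 1)) / 2 ^ n * deriv bump (x / 2 ^ n))
      = (c n - c (n + 1)) * (x / 2 ^ n * deriv bump (x / 2 ^ n)) by ring,
    abs_mul, abs_of_nonneg (sub_nonneg.2 (hc n.le_succ))]
  exact mul_le_mul (sub_succ_le_of_le hc hc0 hNn) (hB _) (abs_nonneg _) (hc.le_of_tendsto hc0 N)

lemma abs_sq_mul_deriv_deriv_majorant_le {B : ℝ}
    (hB : ∀ y, |y ^ 2 * deriv (deriv bump) y| ≤ B) {N : ℕ} {x : ℝ} (hx : 20 * 2 ^ N ≤ |x|) :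
    |x ^ 2 * deriv (deriv (majorant c)) x| ≤ c N * B := by
  obtain ⟨n, hNn, h0, h1⟩ := exists_shell_of_le hx
  rw [deriv_deriv_majorant hc hc0 h0 h1,
    show x ^ 2 * ((c n - c (n + 1)) / 2 ^ n / 2 ^ n * deriv (deriv bump) (x / 2 ^ n))
      = (c n - c (n + 1)) * ((x / 2 ^ n) ^ 2 * deriv (deriv bump) (x / 2 ^ n)) by ring,
    abs_mul, abs_of_nonneg (sub_nonneg.2 (hc n.le_succ))]
  exact mul_le_mul (sub_succ_le_of_le hc hc0 hNn) (hB _) (abs_nonneg _) (hc.le_of_tendsto hc0 N)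

lemma majorant_eq_of_mem_plateau {k : ℕ} (hk : 3 ≤ k) {x : ℝ}
    (h0 : (2 : ℝ) ^ k - 2 ^ (k - 3) ≤ |x|) (h1 : |x| ≤ (2 : ℝ) ^ k + 2 ^ (k - 2)) :
    majorant c x = c (k - 3) := by
  obtain ⟨n, rfl⟩ : ∃ n, k = n + 3 := ⟨k - 3, by omega⟩
  have h8 : (2 : ℝ) ^ (n + 3) = 8 * 2 ^ n := by ring
  rw [Nat.add_sub_cancel] at h0 ⊢
  rw [show n + 3 - 2 = n + 1 by omega, h8, pow_succ] at h1
  refine majorant_eq_of_le_of_le hc hc0 (fun j hj => ?_) (by linarith)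
  have : (2 : ℝ) ^ (j + 1) ≤ 2 ^ n := pow_le_pow_right₀ one_le_two hj
  linarith [pow_succ (2 : ℝ) j]

theorem tame_majorant (hc_pos : ∀ n, 0 < c n) : Tame (majorant c) := by
  obtain ⟨B₁, hB₁⟩ :=
    hasCompactSupport_bump.exists_abs_pow_mul_iterate_deriv_le contDiff_bump 1 1
  obtain ⟨B₂, hB₂⟩ :=
    hasCompactSupport_bump.exists_abs_pow_mul_iterate_deriv_le contDiff_bump 2 2
  simp only [pow_one, Function.iterate_succ, Function.comp_apply] at hB₁ hB₂
  refine ⟨fun x => by simp only [majorant, neg_div, bump_neg], fun x => ?_,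
    antitoneOn_majorant hc hc0, contDiff_majorant hc hc0,
    tendsto_cocompact_of_abs_le hc0 fun _ _ => abs_majorant_le hc hc0,
    tendsto_cocompact_of_abs_le (by simpa using hc0.mul_const B₁) fun _ _ =>
      abs_mul_deriv_majorant_le hc hc0 hB₁,
    tendsto_cocompact_of_abs_le (by simpa using hc0.mul_const B₂) fun _ _ =>
      abs_sq_mul_deriv_deriv_majorant_le hc hc0 hB₂,
    ⟨c 0, fun x hx => majorant_eq_of_le_of_le hc hc0 (by simp) (by linarith)⟩,
    fun k hk => ⟨c (k - 3), fun x h0 h1 => majorant_eq_of_mem_plateau hc hc0 hk h0 h1⟩⟩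
  obtain ⟨n, hn, -⟩ := exists_abs_lt_mul_two_pow (by norm_num : (0 : ℝ) < 10) x
  exact (hc_pos n).trans_le (le_majorant hc hc0 hn.le)

end Majorant

noncomputable def levels (m : ℝ → ℝ) (j : ℕ) : ℝ := m (5 * (2 ^ j - 1))

lemma five_mul_two_pow_sub_one_nonneg (j : ℕ) : (0 : ℝ) ≤ 5 * (2 ^ j - 1) :=
  mul_nonneg (by norm_num) (sub_nonneg.2 (one_le_pow₀ one_le_two))

lemma tendsto_levels {m : ℝ → ℝ} (h0 : Tendsto m atTop (𝓝 0)) :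
    Tendsto (levels m) atTop (𝓝 0) :=
  h0.comp <| (tendsto_atTop_add_const_right _ _ (tendsto_pow_atTop_atTop_of_one_lt one_lt_two))
    |>.const_mul_atTop (by norm_num)

section Levels

variable {m : ℝ → ℝ} (h_mono : AntitoneOn m (Ici 0))
include h_mono

lemma antitone_levels : Antitone (levels m) := fun _ _ hij =>
  h_mono (five_mul_two_pow_sub_one_nonneg _) (five_mul_two_pow_sub_one_nonneg _)
    (by gcongr; norm_num)

lemma le_majorant_levels (h0 : Tendsto m atTop (𝓝 0)) (h_even : ∀ x, m (-x) = m x) (x : ℝ) :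
    m x ≤ majorant (levels m) x := by
  obtain ⟨n, hn, hmin⟩ := exists_abs_lt_mul_two_pow (by norm_num : (0 : ℝ) < 10) x
  have hlevel : 5 * (2 ^ n - 1) ≤ |x| := by
    cases n with
    | zero => simp
    | succ k => linarith [hmin k k.lt_succ_self, pow_succ (2 : ℝ) k]
  calc m x = m |x| := by rcases abs_choice x with h | h <;> simp [h, h_even]
    _ ≤ levels m n := h_mono (five_mul_two_pow_sub_one_nonneg n) (abs_nonneg x) hlevel
    _ ≤ majorant (levels m) x :=
      le_majorant (antitone_levels h_mono) (tendsto_levels h0) hn.le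

lemma majorant_levels_le (h0 : Tendsto m atTop (𝓝 0)) {t : ℝ} (ht : 20 ≤ t) :
    majorant (levels m) t ≤ m (t / 8) := by
  obtain ⟨n, hn, hmin⟩ := exists_abs_lt_mul_two_pow (by norm_num : (0 : ℝ) < 20) t
  rw [abs_of_pos (by linarith)] at hn hmin
  cases n with
  | zero => linarith
  | succ k =>
    have hk : (1 : ℝ) ≤ 2 ^ k := one_le_pow₀ one_le_two
    refine (majorant_le (antitone_levels h_mono) (tendsto_levels h0) fun j hj => ?_).trans <|
      h_mono (by rw [mem_Ici]; linarith) (five_mul_two_pow_sub_one_nonneg (k + 1))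
        (by linarith [pow_succ (2 : ℝ) k])
    rw [abs_of_pos (by linarith)]
    linarith [hmin j hj, pow_pos (two_pos : (0 : ℝ) < 2) j]

end Levels

end TameMajorant

theorem statement3_general (m : ℝ → ℝ)
    (h_even : ∀ x, m (-x) = m x) (h_pos : ∀ x, 0 < m x)
    (h_mono : AntitoneOn m (Set.Ici 0))
    (h_int : ∫⁻ t in Set.Ici (1 : ℝ), ENNReal.ofReal (negLog (m t) / t ^ 2) = ⊤) :
    ∃ ms : ℝ → ℝ, Tame ms ∧ (∀ x, m x ≤ ms x) ∧
      ∫⁻ t in Set.Ici (1 : ℝ), ENNReal.ofReal (negLog (ms t) / t ^ 2) = ⊤ := by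
  open TameMajorant in
  have h0 := tendsto_atTop_zero_of_lintegral_negLog_eq_top h_pos h_mono h_int
  have htame := tame_majorant (antitone_levels h_mono) (tendsto_levels h0) fun _ => h_pos _
  exact ⟨majorant (levels m), htame, le_majorant_levels h_mono h0 h_even,
    lintegral_negLog_eq_top_of_le_comp_div h_pos h_mono h_int htame.2.1
      (by norm_num : (0 : ℝ) < 8) (by norm_num : (1 : ℝ) ≤ 20)
      fun _ ht => majorant_levels_le h_mono h0 ht⟩

/-- An even, positive, continuous function `m`, non-increasing on `[0, ∞)`, with divergent
logarithmic integral, admits a tame majorant with divergent logarithmic integral. -/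
theorem statement3 (m : ℝ → ℝ)
    (h_even : ∀ x, m (-x) = m x) (h_pos : ∀ x, 0 < m x)
    (h_cont : Continuous m) (h_mono : AntitoneOn m (Set.Ici 0))
    (h_int : ∫⁻ t in Set.Ici (1 : ℝ), ENNReal.ofReal (negLog (m t) / t ^ 2) = ⊤) :
    ∃ ms : ℝ → ℝ, Tame ms ∧ (∀ x, m x ≤ ms x) ∧
      ∫⁻ t in Set.Ici (1 : ℝ), ENNReal.ofReal (negLog (ms t) / t ^ 2) = ⊤ :=
  statement3_general m h_even h_pos h_mono h_int
end

section
/- There exists a constant C > 0 such that for every t ≥ 1 and every μ with 0 < μ ≤ t, the integral ∫₀^π sin θ/(t·sin θ + μ)² dθ is at most C·(1 + log(t/μ))/t². -/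
/-!
Since `t sin θ ≤ t sin θ + μ`, the integrand is at most `t⁻¹ (t sin θ + μ)⁻¹`. Jordan's inequality
`sin θ ≥ (2/π) min(θ, π - θ)` bounds `(t sin θ + μ)⁻¹` by `(2tθ/π + μ)⁻¹` plus its reflection under
`θ ↦ π - θ`, and each of these integrates over `[0, π]` to `(π/2t) log(1 + 2t/μ)`. Hence the integral
is at most `π log(1 + 2t/μ) / t²`, and `log(1 + 2x) ≤ 2(1 + log x)` for `x ≥ 1` gives `C = 2π`.
-/

open Real intervalIntegral MeasureTheory Set

lemma intervalIntegrable_inv_mul_add {a μ b : ℝ} (ha : 0 ≤ a) (hμ : 0 < μ) (hb : 0 ≤ b) :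
    IntervalIntegrable (fun x => (a * x + μ)⁻¹) volume 0 b := by
  refine ContinuousOn.intervalIntegrable (ContinuousOn.inv₀ (by fun_prop) fun x hx => ?_)
  rw [uIcc_of_le hb] at hx
  nlinarith [hx.1]

lemma integral_inv_mul_add {a μ b : ℝ} (ha : 0 < a) (hμ : 0 < μ) (hb : 0 ≤ b) :
    ∫ x in (0 : ℝ)..b, (a * x + μ)⁻¹ = log ((a * b + μ) / μ) / a := by
  rw [integral_comp_mul_add (fun x => x⁻¹) ha.ne', integral_inv_of_pos (by simpa) (by positivity),
    mul_zero, zero_add, smul_eq_mul, inv_mul_eq_div]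

lemma div_mul_add_sq_le {t μ s : ℝ} (ht : 0 < t) (hμ : 0 < μ) (hs : 0 ≤ s) :
    s / (t * s + μ) ^ 2 ≤ t⁻¹ * (t * s + μ)⁻¹ := by
  have hD : 0 < t * s + μ := by positivity
  rw [← mul_inv, div_le_iff₀ (by positivity), ← div_eq_inv_mul, le_div_iff₀ (by positivity)]
  nlinarith

lemma two_div_pi_mul_le_sin_or {θ : ℝ} (h0 : 0 ≤ θ) (hπ : θ ≤ π) :
    2 / π * θ ≤ sin θ ∨ 2 / π * (π - θ) ≤ sin θ := by
  rcases le_total θ (π / 2) with h | h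
  · exact Or.inl (mul_le_sin h0 h)
  · exact Or.inr (sin_pi_sub θ ▸ mul_le_sin (by linarith) (by linarith))

lemma inv_mul_sin_add_le {t μ θ : ℝ} (ht : 0 < t) (hμ : 0 < μ) (h0 : 0 ≤ θ) (hπ : θ ≤ π) :
    (t * sin θ + μ)⁻¹ ≤ (2 * t / π * θ + μ)⁻¹ + (2 * t / π * (π - θ) + μ)⁻¹ := by
  have hπθ : 0 ≤ π - θ := sub_nonneg.2 hπ
  have bound : ∀ x, 0 ≤ x → 2 / π * x ≤ sin θ → (t * sin θ + μ)⁻¹ ≤ (2 * t / π * x + μ)⁻¹ := by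
    intro x hx h
    apply inv_anti₀ (by positivity)
    calc 2 * t / π * x + μ = t * (2 / π * x) + μ := by ring
      _ ≤ t * sin θ + μ := by gcongr
  have hl : 0 ≤ (2 * t / π * θ + μ)⁻¹ := by positivity
  have hr : 0 ≤ (2 * t / π * (π - θ) + μ)⁻¹ := by positivity
  rcases two_div_pi_mul_le_sin_or h0 hπ with h | h
  · linarith [bound θ h0 h]
  · linarith [bound (π - θ) hπθ h]
lemma mul_sin_add_pos {t μ θ : ℝ} (ht : 0 ≤ t) (hμ : 0 < μ) (hθ : θ ∈ uIcc 0 π) :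
    0 < t * sin θ + μ := by
  rw [uIcc_of_le pi_pos.le] at hθ
  have := sin_nonneg_of_nonneg_of_le_pi hθ.1 hθ.2
  positivity

lemma integral_inv_mul_sin_add_le {t μ : ℝ} (ht : 0 < t) (hμ : 0 < μ) :
    ∫ θ in (0 : ℝ)..π, (t * sin θ + μ)⁻¹ ≤ π / t * log ((2 * t + μ) / μ) := by
  set a := 2 * t / π
  have ha : 0 < a := by positivity
  have hint := intervalIntegrable_inv_mul_add ha.le hμ pi_pos.le
  have hint_reflect : IntervalIntegrable (fun θ => (a * (π - θ) + μ)⁻¹) volume 0 π := by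
    simpa using (hint.comp_sub_left π).symm
  have hreflect : ∫ θ in (0 : ℝ)..π, (a * (π - θ) + μ)⁻¹ = ∫ θ in (0 : ℝ)..π, (a * θ + μ)⁻¹ := by
    simpa using integral_comp_sub_left (a := 0) (b := π) (fun θ => (a * θ + μ)⁻¹) π
  have hint_sin : IntervalIntegrable (fun θ => (t * sin θ + μ)⁻¹) volume 0 π :=
    ContinuousOn.intervalIntegrable <|
      ContinuousOn.inv₀ (by fun_prop) fun θ hθ => (mul_sin_add_pos ht.le hμ hθ).ne'
  calc ∫ θ in (0 : ℝ)..π, (t * sin θ + μ)⁻¹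
      ≤ ∫ θ in (0 : ℝ)..π, ((a * θ + μ)⁻¹ + (a * (π - θ) + μ)⁻¹) :=
        integral_mono_on pi_pos.le hint_sin (hint.add hint_reflect) fun θ hθ =>
          inv_mul_sin_add_le ht hμ hθ.1 hθ.2
    _ = 2 * (log ((a * π + μ) / μ) / a) := by
        rw [integral_add hint hint_reflect, hreflect, integral_inv_mul_add ha hμ pi_pos.le]
        ring
    _ = π / t * log ((2 * t + μ) / μ) := by
        have : a * π = 2 * t := by simp only [a]; field_simp
        rw [this]; simp only [a]; field_simp

lemma log_one_add_two_mul_le {x : ℝ} (hx : 1 ≤ x) : log (1 + 2 * x) ≤ 2 * (1 + log x) := by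
  have hlog3 : log 3 ≤ 2 := by linarith [log_le_sub_one_of_pos (by norm_num : (0 : ℝ) < 3)]
  calc log (1 + 2 * x) ≤ log (3 * x) := log_le_log (by positivity) (by linarith)
    _ = log 3 + log x := log_mul (by norm_num) (by positivity)
    _ ≤ 2 * (1 + log x) := by linarith [log_nonneg hx]

/-- There is a constant `C > 0` such that for every `t ≥ 1` and every `0 < μ ≤ t`,
`∫₀^π sin θ/(t·sin θ + μ)² dθ ≤ C·(1 + log(t/μ))/t²`. -/
theorem statement9 :
    ∃ C : ℝ, 0 < C ∧ ∀ t : ℝ, 1 ≤ t → ∀ μ : ℝ, 0 < μ → μ ≤ t →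
      (∫ θ in (0 : ℝ)..Real.pi, Real.sin θ / (t * Real.sin θ + μ) ^ 2) ≤
        C * (1 + Real.log (t / μ)) / t ^ 2 := by
  refine ⟨2 * π, by positivity, fun t ht μ hμ hμt => ?_⟩
  have ht0 : 0 < t := by linarith
  have hint : IntervalIntegrable (fun θ => sin θ / (t * sin θ + μ) ^ 2) volume 0 π :=
    ContinuousOn.intervalIntegrable <|
      ContinuousOn.div (by fun_prop) (by fun_prop) fun θ hθ => pow_ne_zero 2 (mul_sin_add_pos ht0.le hμ hθ).ne'
  have hint_sin : IntervalIntegrable (fun θ => t⁻¹ * (t * sin θ + μ)⁻¹) volume 0 π :=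
    ContinuousOn.intervalIntegrable <| continuousOn_const.mul <|
      ContinuousOn.inv₀ (by fun_prop) fun θ hθ => (mul_sin_add_pos ht0.le hμ hθ).ne'
  have hratio : (2 * t + μ) / μ = 1 + 2 * (t / μ) := by field_simp; ring
  calc ∫ θ in (0 : ℝ)..π, sin θ / (t * sin θ + μ) ^ 2
      ≤ ∫ θ in (0 : ℝ)..π, t⁻¹ * (t * sin θ + μ)⁻¹ :=
        integral_mono_on pi_pos.le hint hint_sin fun θ hθ =>
          div_mul_add_sq_le ht0 hμ (sin_nonneg_of_nonneg_of_le_pi hθ.1 hθ.2)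
    _ ≤ t⁻¹ * (π / t * log (1 + 2 * (t / μ))) := by
        rw [intervalIntegral.integral_const_mul, ← hratio]
        gcongr
        exact integral_inv_mul_sin_add_le ht0 hμ
    _ ≤ t⁻¹ * (π / t * (2 * (1 + log (t / μ)))) := by
        gcongr
        exact log_one_add_two_mul_le ((one_le_div hμ).2 hμt)
    _ = 2 * π * (1 + log (t / μ)) / t ^ 2 := by field_simp
end

section
/- Let m : ℝ → ℝ be an even, positive function that is non-increasing on [0,∞), and let W : ℂ → ℂ be a function that is holomorphic on ℍ(−m) and continuous on its closure, and such that: (i) Im W(t − i·m(t)) = 0 for every t ∈ ℝ (i.e. Im W vanishes on the boundary curve of ℍ(−m)); (ii) Re W(0) = 0; and (iii) W is Lipschitz with constant C > 0 on the closure of ℍ(−m). Then for every t ≥ 0 one has Im W(t) ≤ C · m(Re W(t)/C). -/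
/-- The domain `ℍ(−m) = {x + iy : y > −m(x)}`. -/
def Hm (m : ℝ → ℝ) : Set ℂ := {z : ℂ | -m z.re < z.im}

/-!
The real point `t` and the boundary point `t - i·m(t)` both lie in the closure of `ℍ(−m)`, at
distance `m(t)`, and `Im W` vanishes at the second; so the Lipschitz bound gives
`Im W(t) ≤ C·m(t)`. Comparing `t` with `0` in the same way gives `|Re W(t)| ≤ C·t`, and since
`m` is even and non-increasing in `|x|`, `m(t) ≤ m(Re W(t)/C)`.
-/

open Complex

lemma ofReal_mem_Hm {m : ℝ → ℝ} {s : ℝ} (hs : 0 < m s) : (s : ℂ) ∈ Hm m := by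
  simp only [Hm, Set.mem_ofPred_eq, ofReal_re, ofReal_im]
  linarith

lemma sub_mul_I_mem_closure_Hm (m : ℝ → ℝ) (t : ℝ) :
    (t : ℂ) - (m t : ℂ) * I ∈ closure (Hm m) := by
  refine Metric.mem_closure_iff.2 fun ε hε =>
    ⟨(t : ℂ) - (m t : ℂ) * I + (ε / 2 : ℝ) * I, ?_, ?_⟩
  · simp only [Hm, Set.mem_ofPred_eq, add_re, add_im, sub_re, sub_im, mul_re, mul_im, ofReal_re,
      ofReal_im, I_re, I_im, mul_zero, mul_one, sub_zero, add_zero, zero_sub]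
    linarith
  · rw [dist_eq_norm, sub_add_cancel_left, norm_neg, norm_mul, norm_I, mul_one, norm_real,
      Real.norm_eq_abs, abs_of_pos (half_pos hε)]
    exact half_lt_self hε

lemma im_le_of_norm_sub_le {a b : ℂ} {r : ℝ} (hb : b.im = 0) (h : ‖a - b‖ ≤ r) :
    a.im ≤ r := by
  have := (le_abs_self _).trans ((abs_im_le_norm (a - b)).trans h)
  rwa [sub_im, hb, sub_zero] at this

lemma abs_re_le_of_norm_sub_le {a b : ℂ} {r : ℝ} (hb : b.re = 0) (h : ‖a - b‖ ≤ r) :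
    |a.re| ≤ r := by
  have := (abs_re_le_norm (a - b)).trans h
  rwa [sub_re, hb, sub_zero] at this

lemma AntitoneOn.le_apply_of_abs_le {m : ℝ → ℝ} (h_mono : AntitoneOn m (Set.Ici 0))
    (h_even : ∀ x, m (-x) = m x) {s t : ℝ} (hst : |s| ≤ t) : m t ≤ m s := by
  have h_abs : m |s| = m s := by
    rcases abs_choice s with h | h <;> rw [h]
    exact h_even s
  exact h_abs ▸ h_mono (abs_nonneg s) ((abs_nonneg s).trans hst) hst

theorem statement12_general (m : ℝ → ℝ)
    (h_even : ∀ x, m (-x) = m x) (h_pos : ∀ x, 0 < m x)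
    (h_mono : AntitoneOn m (Set.Ici 0))
    (W : ℂ → ℂ)
    (h_bdry : ∀ t : ℝ, (W ((t : ℂ) - (m t : ℂ) * Complex.I)).im = 0)
    (h_zero : (W 0).re = 0)
    (C : ℝ) (hC : 0 < C)
    (h_lip : ∀ z ∈ closure (Hm m), ∀ z' ∈ closure (Hm m), ‖W z - W z'‖ ≤ C * ‖z - z'‖) :
    ∀ t : ℝ, 0 ≤ t → (W (t : ℂ)).im ≤ C * m ((W (t : ℂ)).re / C) := by
  intro t ht
  have h_real (s : ℝ) : (s : ℂ) ∈ closure (Hm m) := subset_closure (ofReal_mem_Hm (h_pos s))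
  have h_im : (W t).im ≤ C * m t := by
    refine im_le_of_norm_sub_le (h_bdry t)
      ((h_lip _ (h_real t) _ (sub_mul_I_mem_closure_Hm m t)).trans ?_)
    rw [sub_sub_cancel, norm_mul, norm_I, mul_one, norm_real, Real.norm_of_nonneg (h_pos t).le]
  have h_re : |(W t).re| ≤ C * t := by
    refine abs_re_le_of_norm_sub_le h_zero
      ((h_lip _ (h_real t) _ (by simpa using h_real 0)).trans ?_)
    rw [sub_zero, norm_real, Real.norm_of_nonneg ht]
  have h_arg : |(W t).re / C| ≤ t := by
    rw [abs_div, abs_of_pos hC, div_le_iff₀ hC]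
    linarith
  calc (W t).im ≤ C * m t := h_im
    _ ≤ C * m ((W t).re / C) := by
      gcongr
      exact h_mono.le_apply_of_abs_le h_even h_arg

/-- Let `m` be even, positive and non-increasing on `[0, ∞)`, and let `W` be holomorphic on
`ℍ(−m)`, continuous on its closure, with `Im W = 0` on the boundary curve `{t − i·m(t)}`,
`Re W(0) = 0`, and Lipschitz with constant `C` on the closure of `ℍ(−m)`.  Then
`Im W(t) ≤ C·m(Re W(t)/C)` for every `t ≥ 0`. -/
theorem statement12 (m : ℝ → ℝ)
    (h_even : ∀ x, m (-x) = m x) (h_pos : ∀ x, 0 < m x)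
    (h_mono : AntitoneOn m (Set.Ici 0))
    (W : ℂ → ℂ)
    (hW_holo : DifferentiableOn ℂ W (Hm m))
    (hW_cont : ContinuousOn W (closure (Hm m)))
    (h_bdry : ∀ t : ℝ, (W ((t : ℂ) - (m t : ℂ) * Complex.I)).im = 0)
    (h_zero : (W 0).re = 0)
    (C : ℝ) (hC : 0 < C)
    (h_lip : ∀ z ∈ closure (Hm m), ∀ z' ∈ closure (Hm m), ‖W z - W z'‖ ≤ C * ‖z - z'‖) :
    ∀ t : ℝ, 0 ≤ t → (W (t : ℂ)).im ≤ C * m ((W (t : ℂ)).re / C) :=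
  statement12_general m h_even h_pos h_mono W h_bdry h_zero C hC h_lip
end
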